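/- arXiv:1709.10466 — 2 statements merged into one kernel-verified Lean document; each statement's English description precedes it below -/
import Mathlib

section
/- Let A be a finite set equipped with a unimax conflict-free coloring col : A → ℕ with respect to a family of ranges (i.e., for every nonempty range R ⊆ A from the family, the maximum color among elements of R is attained by exactly one element of R). Let z be an integer and let B ⊆ A be a subset containing all elements of A with color greater than z, some elements of color z, and at most one further element (of color less than z). Then the restriction of col to B is again unimax: for every range R with R ∩ B nonempty, the maximum color in R ∩ B is attained by exactly one element of R ∩ B, provided ranges are closed under intersection with B (i.e., for every range R, R ∩ B is the trace of R on B). -/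
/-- Restriction of a unimax coloring: if `col` is unimax on the ranges of a hypergraph
with vertex set `A`, and `B ⊆ A` contains all elements of color `> z`, some elements of
color `z` and at most one further element (of color `< z`), then the restriction of
`col` to `B` is unimax on the traces of the ranges. -/
theorem stmt2 {α : Type*} [DecidableEq α] (A : Finset α) (E : Set (Finset α)) (col : α → ℕ)
    (hE : ∀ R ∈ E, R ⊆ A ∧ R.Nonempty)
    (hunimax : ∀ R ∈ E, ∃! a, a ∈ R ∧ ∀ b ∈ R, col b ≤ col a)
    (z : ℕ) (B : Finset α) (hBA : B ⊆ A)
    (hhigh : ∀ a ∈ A, z < col a → a ∈ B)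
    (hlow : ∃ w : α, ∀ b ∈ B, col b < z → b = w) :
    ∀ R ∈ E, (R ∩ B).Nonempty →
      ∃! a, a ∈ R ∩ B ∧ ∀ b ∈ R ∩ B, col b ≤ col a := by
  intro R hR hne
  obtain ⟨a, ⟨haR, hamax⟩, huniq⟩ := hunimax R hR
  by_cases haB : a ∈ B
  · refine ⟨a, ⟨Finset.mem_inter.mpr ⟨haR, haB⟩, fun b hb => hamax b (Finset.mem_inter.mp hb).1⟩, ?_⟩
    intro a' ⟨ha'RB, ha'max⟩
    have ha'R := (Finset.mem_inter.mp ha'RB).1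
    have h1 : col a ≤ col a' := ha'max a (Finset.mem_inter.mpr ⟨haR, haB⟩)
    exact huniq a' ⟨ha'R, fun b hb => le_trans (hamax b hb) h1⟩
  · -- a ∉ B, so col a ≤ z, and every element of R ∩ B has color < z, hence equals w
    obtain ⟨w, hw⟩ := hlow
    have hcolaz : col a ≤ z := by
      by_contra h
      exact haB (hhigh a ((hE R hR).1 haR) (Nat.lt_of_not_le h))
    have key : ∀ b ∈ R ∩ B, b = w := by
      intro b hb
      obtain ⟨hbR, hbB⟩ := Finset.mem_inter.mp hb
      have hlt : col b < col a := by
        rcases lt_or_eq_of_le (hamax b hbR) with h | h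
        · exact h
        · exfalso
          have : b = a := huniq b ⟨hbR, fun c hc => h ▸ hamax c hc⟩
          exact haB (this ▸ hbB)
      exact hw b hbB (lt_of_lt_of_le hlt hcolaz)
    obtain ⟨x, hx⟩ := hne
    have hxw : x = w := key x hx
    refine ⟨w, ⟨hxw ▸ hx, fun b hb => by rw [key b hb]⟩, ?_⟩
    intro a' ⟨ha', _⟩
    exact key a' ha'
end

section
/- Let P = {p_1 < p_2 < ... < p_n} be n points on the real line with a unimax coloring with respect to intervals (every nonempty set of consecutive points has a unique point of maximum color). Suppose point p_k with color i is deleted, and the coloring is updated as follows: if both neighbors p_{k-1} and p_{k+1} (those that exist) have colors greater than i, do nothing; otherwise recolor one neighbor whose color is smaller than i to color i. Then the resulting coloring of P \ {p_k} is again unimax with respect to intervals. -/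
/-- Weak deletion for a unimax coloring of points with respect to intervals.
Points are indexed by `Fin n` in sorted order; ranges are index intervals `[i,j]`.
`col` is unimax on all intervals, index `k` is deleted, and `col'` is obtained by the
update rule: if every existing neighbor of `k` has color greater than `col k`, nothing
changes; otherwise one neighbor of color smaller than `col k` is recolored to `col k`
and everything else is unchanged. Then `col'` is unimax on all intervals of the
remaining points. -/
theorem stmt4 (n : ℕ) (col col' : Fin n → ℕ) (k : Fin n)
    (hunimax : ∀ i j : Fin n, i ≤ j →
      ∃ x : Fin n, i ≤ x ∧ x ≤ j ∧
        (∀ y, i ≤ y → y ≤ j → col y ≤ col x) ∧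
        (∀ y, i ≤ y → y ≤ j → col y = col x → y = x))
    (hupd :
      ((∀ j : Fin n, ((j : ℕ) + 1 = k ∨ (k : ℕ) + 1 = j) → col k < col j) ∧
        (∀ m : Fin n, m ≠ k → col' m = col m)) ∨
      (∃ j : Fin n, ((j : ℕ) + 1 = k ∨ (k : ℕ) + 1 = j) ∧ col j < col k ∧
        col' j = col k ∧ (∀ m : Fin n, m ≠ k → m ≠ j → col' m = col m))) :
    ∀ i j : Fin n, i ≤ j → (∃ m : Fin n, i ≤ m ∧ m ≤ j ∧ m ≠ k) →
      ∃ x : Fin n, i ≤ x ∧ x ≤ j ∧ x ≠ k ∧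
        (∀ y, i ≤ y → y ≤ j → y ≠ k → col' y ≤ col' x) ∧
        (∀ y, i ≤ y → y ≤ j → y ≠ k → col' y = col' x → y = x) := by
  intro i j hij hm
  obtain ⟨m, him, hmj, hmk⟩ := hm
  rcases hupd with ⟨hnb, heq⟩ | ⟨j₀, hadj, hlt, hj₀, heq⟩
  · -- Case A: nothing changed
    obtain ⟨x, hix, hxj, hmax, huniq⟩ := hunimax i j hij
    have hxk : x ≠ k := by
      intro hxk
      have hmk' : (m : ℕ) ≠ (k : ℕ) := fun h => hmk (Fin.ext h)
      rcases Nat.lt_or_ge (m : ℕ) (k : ℕ) with hc | hc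
      · have h1 : 1 ≤ (k : ℕ) := by omega
        set nb : Fin n := ⟨(k : ℕ) - 1, by omega⟩ with hnbdef
        have hadj : (nb : ℕ) + 1 = (k : ℕ) := by simp [hnbdef]; omega
        have h2 : col k < col nb := hnb nb (Or.inl hadj)
        have h3 : col nb ≤ col x := by
          apply hmax nb
          · rw [Fin.le_def] at him ⊢; simp [hnbdef]; omega
          · rw [Fin.le_def] at hxj ⊢
            have : (x : ℕ) = (k : ℕ) := by rw [hxk]
            simp [hnbdef]; omega
        rw [hxk] at h3; omega
      · have hc' : (k : ℕ) < (m : ℕ) := by omega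
        set nb : Fin n := ⟨(k : ℕ) + 1, by omega⟩ with hnbdef
        have hadj : (k : ℕ) + 1 = (nb : ℕ) := by simp [hnbdef]
        have h2 : col k < col nb := hnb nb (Or.inr hadj)
        have h3 : col nb ≤ col x := by
          apply hmax nb
          · rw [Fin.le_def] at hix ⊢
            have : (x : ℕ) = (k : ℕ) := by rw [hxk]
            simp [hnbdef]; omega
          · rw [Fin.le_def] at hmj ⊢; simp [hnbdef]; omega
        rw [hxk] at h3; omega
    refine ⟨x, hix, hxj, hxk, ?_, ?_⟩
    · intro y hiy hyj hyk
      rw [heq y hyk, heq x hxk]; exact hmax y hiy hyj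
    · intro y hiy hyj hyk hcy
      rw [heq y hyk, heq x hxk] at hcy
      exact huniq y hiy hyj hcy
  · -- Case B: neighbor j₀ recolored
    have hj₀k : j₀ ≠ k := fun h => by rw [h] at hlt; omega
    by_cases hj0in : i ≤ j₀ ∧ j₀ ≤ j
    · -- j₀ inside the interval: extend to include k
      obtain ⟨hij0, hj0j⟩ := hj0in
      set i' : Fin n := min i k with hi'def
      set j' : Fin n := max j k with hj'def
      have hi'i : i' ≤ i := min_le_left _ _
      have hi'k : i' ≤ k := min_le_right _ _
      have hjj' : j ≤ j' := le_max_left _ _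
      have hkj' : k ≤ j' := le_max_right _ _
      have hTsub : ∀ y : Fin n, i' ≤ y → y ≤ j' → y ≠ k → i ≤ y ∧ y ≤ j := by
        intro y h1 h2 hyk
        have hyk' : (y : ℕ) ≠ (k : ℕ) := fun h => hyk (Fin.ext h)
        constructor
        · rcases min_choice i k with hc | hc
          · rw [hi'def, hc] at h1; exact h1
          · rw [hi'def, hc] at h1
            rw [Fin.le_def] at h1 ⊢
            have h3 := Fin.le_def.mp hij0
            rcases hadj with ha | ha <;> omega
        · rcases max_choice j k with hc | hc
          · rw [hj'def, hc] at h2; exact h2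
          · rw [hj'def, hc] at h2
            rw [Fin.le_def] at h2 ⊢
            have h3 := Fin.le_def.mp hj0j
            rcases hadj with ha | ha <;> omega
      have hi'j' : i' ≤ j' := le_trans hi'i (le_trans hij hjj')
      obtain ⟨x, hi'x, hxj', hmax, huniq⟩ := hunimax i' j' hi'j'
      have hkT : col k ≤ col x := hmax k hi'k hkj'
      have hxj0 : x ≠ j₀ := by
        intro h; rw [h] at hkT; omega
      have hj0T : i' ≤ j₀ ∧ j₀ ≤ j' := ⟨le_trans hi'i hij0, le_trans hj0j hjj'⟩
      by_cases hx : x = k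
      · -- the max of T is k; then j₀ is the new max
        refine ⟨j₀, hij0, hj0j, hj₀k, ?_, ?_⟩
        · intro y hiy hyj hyk
          by_cases hyj0 : y = j₀
          · rw [hyj0]
          · rw [heq y hyk hyj0, hj₀]
            calc col y ≤ col x := hmax y (le_trans hi'i hiy) (le_trans hyj hjj')
            _ = col k := by rw [hx]
        · intro y hiy hyj hyk hcy
          by_cases hyj0 : y = j₀
          · exact hyj0
          · rw [heq y hyk hyj0, hj₀] at hcy
            have : col y = col x := by rw [hx]; exact hcy
            have := huniq y (le_trans hi'i hiy) (le_trans hyj hjj') this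
            exact absurd (this.trans hx) hyk
      · -- max of T is some x ≠ k, x ≠ j₀
        obtain ⟨hix, hxj⟩ := hTsub x hi'x hxj' hx
        have hcx : col' x = col x := heq x hx hxj0
        refine ⟨x, hix, hxj, hx, ?_, ?_⟩
        · intro y hiy hyj hyk
          by_cases hyj0 : y = j₀
          · rw [hyj0, hj₀, hcx]; exact hkT
          · rw [heq y hyk hyj0, hcx]
            exact hmax y (le_trans hi'i hiy) (le_trans hyj hjj')
        · intro y hiy hyj hyk hcy
          by_cases hyj0 : y = j₀
          · rw [hyj0, hj₀, hcx] at hcy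
            have := huniq k hi'k hkj' hcy
            exact absurd this.symm hx
          · rw [heq y hyk hyj0, hcx] at hcy
            exact huniq y (le_trans hi'i hiy) (le_trans hyj hjj') hcy
    · -- j₀ outside the interval
      by_cases hkin : i ≤ k ∧ k ≤ j
      · -- k inside, j₀ outside: interval hugs k on one side
        rcases hadj with ha | ha
        · -- j₀ = k - 1, so i = k, work on [k+1, j]
          have hik : (i : ℕ) = (k : ℕ) := by
            have h1 : j₀ ≤ j := by
              rw [Fin.le_def]; have := Fin.le_def.mp hkin.2; omega
            have h2 : ¬ i ≤ j₀ := fun h => hj0in ⟨h, h1⟩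
            rw [Fin.le_def] at h2
            have := Fin.le_def.mp hkin.1
            omega
          have hkm : (k : ℕ) < (m : ℕ) := by
            have := Fin.le_def.mp him
            have : (m : ℕ) ≠ (k : ℕ) := fun h => hmk (Fin.ext h)
            have := Fin.le_def.mp him
            omega
          set i'' : Fin n := ⟨(k : ℕ) + 1, by omega⟩ with hi''def
          have hi''j : i'' ≤ j := by
            rw [Fin.le_def]; have := Fin.le_def.mp hmj; simp [hi''def]; omega
          obtain ⟨x, hi''x, hxj, hmax, huniq⟩ := hunimax i'' j hi''j
          have hxk : x ≠ k := by
            intro h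
            have := Fin.le_def.mp hi''x
            rw [h] at this; simp [hi''def] at this
          have hyin : ∀ y : Fin n, i ≤ y → y ≠ k → i'' ≤ y := by
            intro y h1 h2
            rw [Fin.le_def] at h1 ⊢
            have : (y : ℕ) ≠ (k : ℕ) := fun h => h2 (Fin.ext h)
            simp [hi''def]; omega
          have hynj0 : ∀ y : Fin n, i ≤ y → y ≠ j₀ := by
            intro y h1 h2
            rw [h2] at h1
            rw [Fin.le_def] at h1
            omega
          have hix : i ≤ x := by
            rw [Fin.le_def]; have := Fin.le_def.mp hi''x; simp [hi''def] at this; omega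
          refine ⟨x, hix, hxj, hxk, ?_, ?_⟩
          · intro y hiy hyj hyk
            rw [heq y hyk (hynj0 y hiy), heq x hxk (hynj0 x hix)]
            exact hmax y (hyin y hiy hyk) hyj
          · intro y hiy hyj hyk hcy
            rw [heq y hyk (hynj0 y hiy), heq x hxk (hynj0 x hix)] at hcy
            exact huniq y (hyin y hiy hyk) hyj hcy
        · -- j₀ = k + 1, so j = k, work on [i, k-1]
          have hjk : (j : ℕ) = (k : ℕ) := by
            have h1 : i ≤ j₀ := by
              rw [Fin.le_def]; have := Fin.le_def.mp hkin.1; omega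
            have h2 : ¬ j₀ ≤ j := fun h => hj0in ⟨h1, h⟩
            rw [Fin.le_def] at h2
            have := Fin.le_def.mp hkin.2
            omega
          have hkm : (m : ℕ) < (k : ℕ) := by
            have h1 := Fin.le_def.mp hmj
            have : (m : ℕ) ≠ (k : ℕ) := fun h => hmk (Fin.ext h)
            omega
          set j'' : Fin n := ⟨(k : ℕ) - 1, by omega⟩ with hj''def
          have hij'' : i ≤ j'' := by
            rw [Fin.le_def]; have := Fin.le_def.mp him; simp [hj''def]; omega
          obtain ⟨x, hix, hxj'', hmax, huniq⟩ := hunimax i j'' hij''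
          have hxk : x ≠ k := by
            intro h
            have := Fin.le_def.mp hxj''
            rw [h] at this; simp [hj''def] at this; omega
          have hyin : ∀ y : Fin n, y ≤ j → y ≠ k → y ≤ j'' := by
            intro y h1 h2
            rw [Fin.le_def] at h1 ⊢
            have : (y : ℕ) ≠ (k : ℕ) := fun h => h2 (Fin.ext h)
            simp [hj''def]; omega
          have hynj0 : ∀ y : Fin n, y ≤ j → y ≠ j₀ := by
            intro y h1 h2
            rw [h2] at h1
            rw [Fin.le_def] at h1
            omega
          have hxj : x ≤ j := by
            rw [Fin.le_def]; have := Fin.le_def.mp hxj''; simp [hj''def] at this; omega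
          refine ⟨x, hix, hxj, hxk, ?_, ?_⟩
          · intro y hiy hyj hyk
            rw [heq y hyk (hynj0 y hyj), heq x hxk (hynj0 x hxj)]
            exact hmax y hiy (hyin y hyj hyk)
          · intro y hiy hyj hyk hcy
            rw [heq y hyk (hynj0 y hyj), heq x hxk (hynj0 x hxj)] at hcy
            exact huniq y hiy (hyin y hyj hyk) hcy
      · -- both k and j₀ outside: nothing changed on [i,j]
        obtain ⟨x, hix, hxj, hmax, huniq⟩ := hunimax i j hij
        have hne : ∀ y : Fin n, i ≤ y → y ≤ j → y ≠ k ∧ y ≠ j₀ := by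
          intro y h1 h2
          constructor
          · intro h; rw [h] at h1 h2; exact hkin ⟨h1, h2⟩
          · intro h; rw [h] at h1 h2; exact hj0in ⟨h1, h2⟩
        obtain ⟨hxk, hxj0⟩ := hne x hix hxj
        refine ⟨x, hix, hxj, hxk, ?_, ?_⟩
        · intro y hiy hyj hyk
          rw [heq y hyk (hne y hiy hyj).2, heq x hxk hxj0]
          exact hmax y hiy hyj
        · intro y hiy hyj hyk hcy
          rw [heq y hyk (hne y hiy hyj).2, heq x hxk hxj0] at hcy
          exact huniq y hiy hyj hcy
end
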